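/- Let X be a compact metric space, f : X → X continuous, and φ : X → ℝ continuous and eventually positive, i.e. there exists N ∈ ℕ such that Sₙφ(x) > 0 for all x ∈ X and all n ≥ N. Then the set of continuous ψ : X → ℝ that are eventually positive is open in C(X) with the uniform norm; more precisely, if ‖ψ − φ‖_∞ < (1/N) min_{x∈X} S_Nφ(x) · (1/2) then ψ is eventually positive. (It suffices to show: if S_Nφ(x) ≥ c > 0 for all x and ‖ψ−φ‖_∞ < c/(2N), then ψ is eventually positive.) -/

import Mathlib

/-! Uniformly perturbing `φ` by less than `c / (2N)` changes each `N`-block Birkhoff sum by less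
than `c / 2`, so `S_N ψ ≥ c / 2` everywhere. Splitting `n = kN + r` with `r < N`, the `k` blocks
contribute at least `k c / 2`, while the remaining `r` terms cost at most `N` times a lower bound
of the continuous function `ψ` on the compact space; the first term wins once `k` is large. -/

open Filter Set

section

variable {α : Type*} (f : α → α)

theorem natCast_mul_le_birkhoffSum {g : α → ℝ} {b : ℝ} (hb : ∀ x, b ≤ g x) (n : ℕ) (x : α) :
    n * b ≤ birkhoffSum f g n x := by
  simpa [birkhoffSum] using Finset.card_nsmul_le_sum (Finset.range n) (fun k => g (f^[k] x)) b fun k _ => hb _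

theorem birkhoffSum_sub_mul_le_birkhoffSum {φ ψ : α → ℝ} {ε : ℝ} (h : ∀ x, φ x - ε ≤ ψ x)
    (n : ℕ) (x : α) : birkhoffSum f φ n x - n * ε ≤ birkhoffSum f ψ n x := by
  have := natCast_mul_le_birkhoffSum f (g := ψ - φ) (b := -ε)
    (fun x => by simpa using sub_le_sub_right (h x) (φ x)) n x
  rw [birkhoffSum_sub] at this
  linarith

theorem natCast_mul_le_birkhoffSum_mul {g : α → ℝ} {N : ℕ} {a : ℝ}
    (hblock : ∀ x, a ≤ birkhoffSum f g N x) (k : ℕ) (x : α) :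
    k * a ≤ birkhoffSum f g (k * N) x := by
  induction k with
  | zero => simp
  | succ k ih =>
    rw [Nat.succ_mul, birkhoffSum_add]
    push_cast
    linarith [hblock (f^[k * N] x)]

theorem eventually_birkhoffSum_pos {g : α → ℝ} (hg : BddBelow (range g)) {N : ℕ} (hN : 0 < N)
    {a : ℝ} (ha : 0 < a) (hblock : ∀ x, a ≤ birkhoffSum f g N x) :
    ∀ᶠ n in atTop, ∀ x, 0 < birkhoffSum f g n x := by
  obtain ⟨b, hb⟩ := hg
  have hb' : ∀ x, min b 0 ≤ g x := fun x => (min_le_left _ _).trans (hb ⟨x, rfl⟩)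
  obtain ⟨K, hK⟩ := exists_nat_gt (-(N * min b 0) / a)
  filter_upwards [eventually_ge_atTop (K * N)] with n hn x
  have hk : K ≤ n / N := (Nat.le_div_iff_mul_le hN).mpr hn
  have hr : ((n % N : ℕ) : ℝ) ≤ N := by exact_mod_cast (Nat.mod_lt n hN).le
  rw [← Nat.div_add_mod' n N, birkhoffSum_add]
  have hblocks := natCast_mul_le_birkhoffSum_mul f hblock (n / N) x
  have hrest := natCast_mul_le_birkhoffSum f hb' (n % N) (f^[n / N * N] x)
  have hKa : -(N * min b 0) < K * a := (div_lt_iff₀ ha).mp hK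
  have hkK : (K : ℝ) * a ≤ (n / N : ℕ) * a := by gcongr
  nlinarith [min_le_right b 0]

end

theorem stmt2_general {X : Type*} [MetricSpace X] [CompactSpace X]
    (f : X → X) (φ ψ : X → ℝ)
    (hψ : Continuous ψ) (N : ℕ) (hN : 0 < N) (c : ℝ) (hc : 0 < c)
    (hSN : ∀ x : X, c ≤ ∑ j ∈ Finset.range N, φ (f^[j] x))
    (hclose : ∀ x : X, |ψ x - φ x| < c / (2 * N)) :
    ∃ M : ℕ, ∀ x : X, ∀ n : ℕ, M ≤ n → 0 < ∑ j ∈ Finset.range n, ψ (f^[j] x) := by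
  have hblock : ∀ x, c / 2 ≤ birkhoffSum f ψ N x := fun x => by
    have hε : (N : ℝ) * (c / (2 * N)) = c / 2 := by field_simp
    have hperturb := birkhoffSum_sub_mul_le_birkhoffSum f (φ := φ) (ψ := ψ) (ε := c / (2 * N))
      (fun y => by linarith [(abs_lt.mp (hclose y)).1]) N x
    have hφ : c ≤ birkhoffSum f φ N x := hSN x
    linarith
  obtain ⟨M, hM⟩ := eventually_atTop.mp <|
    eventually_birkhoffSum_pos f (isCompact_range hψ).bddBelow hN (half_pos hc) hblock
  exact ⟨M, fun x n hn => hM n hn x⟩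

/-- Eventual positivity is stable under uniform perturbation: if `S_N φ ≥ c > 0`
everywhere and `‖ψ − φ‖_∞ < c / (2N)`, then `ψ` is eventually positive. -/
theorem stmt2 {X : Type*} [MetricSpace X] [CompactSpace X] [Nonempty X]
    (f : X → X) (hf : Continuous f) (φ ψ : X → ℝ) (hφ : Continuous φ)
    (hψ : Continuous ψ) (N : ℕ) (hN : 0 < N) (c : ℝ) (hc : 0 < c)
    (hSN : ∀ x : X, c ≤ ∑ j ∈ Finset.range N, φ (f^[j] x))
    (hclose : ∀ x : X, |ψ x - φ x| < c / (2 * N)) :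
    ∃ M : ℕ, ∀ x : X, ∀ n : ℕ, M ≤ n → 0 < ∑ j ∈ Finset.range n, ψ (f^[j] x) :=
  stmt2_general f φ ψ hψ N hN c hc hSN hclose
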